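/- arXiv:2504.16863 — 3 statements merged into one kernel-verified Lean document; each statement's English description precedes it below -/
import Mathlib

section
/- For every graph G, the maximum degree of the quotient G̃ of G by the true-twin relation satisfies Δ(G̃) ≤ cideg(G) · (ω̃(G) − 1), where cideg(G) is the maximum number of maximal cliques of G containing a single vertex, and ω̃(G) is the maximum number of true-twin classes intersecting a single maximal clique. -/
variable {V : Type} {W : Type}

/-- Two vertices are true twins: they have the same closed neighbourhood. -/
def twin (G : SimpleGraph V) (x y : V) : Prop :=
  ∀ z, (G.Adj x z ∨ x = z) ↔ (G.Adj y z ∨ y = z)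

/-- The true-twin relation as a setoid. -/
def twinSetoid (G : SimpleGraph V) : Setoid V :=
  ⟨twin G, ⟨fun _ _ => Iff.rfl, fun h z => (h z).symm, fun h1 h2 z => (h1 z).trans (h2 z)⟩⟩

/-- The quotient of `G` by the true-twin relation. -/
def quotGraph (G : SimpleGraph V) : SimpleGraph (Quotient (twinSetoid G)) where
  Adj a b := a ≠ b ∧ ∃ x y, Quotient.mk (twinSetoid G) x = a ∧
    Quotient.mk (twinSetoid G) y = b ∧ G.Adj x y
  symm := by
    constructor
    rintro a b ⟨h, x, y, hx, hy, hxy⟩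
    exact ⟨h.symm, y, x, hy, hx, hxy.symm⟩
  loopless := by constructor; rintro a ⟨h, _⟩; exact h rfl

/-- The true-twin class of a vertex. -/
def qmk (G : SimpleGraph V) (v : V) : Quotient (twinSetoid G) :=
  Quotient.mk (twinSetoid G) v

/-- `K` is a maximal clique of `G`. -/
def MaxClique (G : SimpleGraph V) (K : Set V) : Prop :=
  G.IsClique K ∧ ∀ K', G.IsClique K' → K ⊆ K' → K' = K

/-- `S` is an independent set of `G`. -/
def IndepSet (G : SimpleGraph V) (S : Set V) : Prop :=
  ∀ x ∈ S, ∀ y ∈ S, ¬ G.Adj x y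

/-- Independence number. -/
noncomputable def indepNum (G : SimpleGraph V) : ℕ :=
  sSup {n | ∃ S : Set V, IndepSet G S ∧ S.ncard = n}

/-- Clique cover number: minimum number of cliques covering all vertices. -/
noncomputable def cliqueCoverNum (G : SimpleGraph V) : ℕ :=
  sInf {n | ∃ f : Fin n → Set V, (∀ i, G.IsClique (f i)) ∧ ∀ v, ∃ i, v ∈ f i}

/-- Closed neighbourhood. -/
def cNbhd (G : SimpleGraph V) (v : V) : Set V := insert v (G.neighborSet v)

/-- Local independence number. -/
noncomputable def alphaLoc (G : SimpleGraph V) : ℕ :=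
  sSup {n | ∃ v, ∃ S ⊆ cNbhd G v, IndepSet G S ∧ S.ncard = n}

/-- Local clique cover number. -/
noncomputable def thetaLoc (G : SimpleGraph V) : ℕ :=
  sSup {n | ∃ v, cliqueCoverNum (G.induce (cNbhd G v)) = n}

/-- Clique-incidence-degree: max number of maximal cliques containing a vertex. -/
noncomputable def cideg (G : SimpleGraph V) : ℕ :=
  sSup {n | ∃ v, {K | MaxClique G K ∧ v ∈ K}.ncard = n}

/-- Clique-incidence-diversity: max number of true-twin classes meeting a maximal clique. -/
noncomputable def cliqueIncDiv (G : SimpleGraph V) : ℕ :=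
  sSup {n | ∃ K, MaxClique G K ∧ (qmk G '' K).ncard = n}

/-- Clique-degree: max number of other maximal cliques intersecting a maximal clique. -/
noncomputable def cdeg (G : SimpleGraph V) : ℕ :=
  sSup {n | ∃ K, MaxClique G K ∧ {K' | MaxClique G K' ∧ K' ≠ K ∧ (K' ∩ K).Nonempty}.ncard = n}

/-- Maximum degree. -/
noncomputable def maxDeg (H : SimpleGraph W) : ℕ :=
  sSup {n | ∃ v, (H.neighborSet v).ncard = n}

/-- Clique number. -/
noncomputable def cliqueNum (H : SimpleGraph W) : ℕ :=
  sSup {n | ∃ K : Set W, H.IsClique K ∧ K.ncard = n}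

/-- A separation of a graph. -/
def IsSep (H : SimpleGraph W) (A B : Set W) : Prop :=
  A ∪ B = Set.univ ∧ ∀ a ∈ A \ B, ∀ b ∈ B \ A, ¬ H.Adj a b

/-- A tree-decomposition. -/
structure TreeDec {ι : Type} (G : SimpleGraph V) (T : SimpleGraph ι) (β : ι → Set V) : Prop where
  tree : T.IsTree
  cover : ∀ v, ∃ t, v ∈ β t
  edges : ∀ v w, G.Adj v w → ∃ t, v ∈ β t ∧ w ∈ β t
  subtree : ∀ v, (T.induce {t | v ∈ β t}).Connected

/-- α-treewidth (tree-independence number). -/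
noncomputable def alphaTW (G : SimpleGraph V) : ℕ :=
  sInf {n | ∃ (ι : Type) (T : SimpleGraph ι) (β : ι → Set V), TreeDec G T β ∧
    ∀ t, ∀ S ⊆ β t, IndepSet G S → S.ncard ≤ n}

/-- Neighbourhood of a set of vertices (outside the set). -/
def setNbhd (G : SimpleGraph V) (K : Set V) : Set V :=
  {v | v ∉ K ∧ ∃ x ∈ K, G.Adj v x}

/-- Diversity number of a set `K`: max size of a `K`-diverse set of neighbours. -/
noncomputable def dn (G : SimpleGraph V) (K : Set V) : ℕ :=
  sSup {n | ∃ Y ⊆ setNbhd G K,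
    (∀ y1 ∈ Y, ∀ y2 ∈ Y, y1 ≠ y2 → G.neighborSet y1 ∩ K ≠ G.neighborSet y2 ∩ K) ∧ Y.ncard = n}

/-- Cutrank of a set of vertices: F₂-rank of the corresponding submatrix
of the adjacency matrix. -/
noncomputable def cutrank (G : SimpleGraph V) [Fintype V] (X : Set V) : ℕ :=
  haveI : DecidableRel G.Adj := Classical.decRel _
  haveI : Fintype ↥X := Fintype.ofFinite _
  haveI : Fintype ↥(Xᶜ) := Fintype.ofFinite _
  (Matrix.of fun (x : ↥X) (y : ↥(Xᶜ)) => if G.Adj x.1 y.1 then (1 : ZMod 2) else 0).rank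

/-- `G` admits a rank-decomposition of width at most `w`: a tree whose internal
nodes have degree 3, whose leaves are in bijection with `V(G)`, such that every
edge induces a bipartition of the vertices of cutrank at most `w`. -/
def HasRankDecompOfWidth (G : SimpleGraph V) [Fintype V] (w : ℕ) : Prop :=
  ∃ (ι : Type) (T : SimpleGraph ι) (δ : V → ι),
    T.IsTree ∧ Function.Injective δ ∧
    (∀ t, (T.neighborSet t).ncard = 1 ↔ ∃ v, δ v = t) ∧
    (∀ t, (T.neighborSet t).ncard = 1 ∨ (T.neighborSet t).ncard = 3) ∧
    ∀ a b, T.Adj a b → cutrank G {v | (T.deleteEdges {s(a,b)}).Reachable (δ v) a} ≤ w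

/-- An injective enumeration of a path that is induced in `G`. -/
def IsInducedPath (G : SimpleGraph V) {ℓ : ℕ} (x : Fin ℓ → V) : Prop :=
  Function.Injective x ∧ ∀ i j, G.Adj (x i) (x j) ↔ (i.val + 1 = j.val ∨ j.val + 1 = i.val)

/-! A neighbour of the class of `v` in `G̃` is the class of some neighbour `y` of `v`, and the
edge `vy` lies in a maximal clique through `v`. So the neighbourhood of `[v]` is covered by the
classes meeting the at most `cideg G` maximal cliques through `v`, each of which contributes at
most `ω̃(G) - 1` classes other than `[v]`. -/

open Set

section

variable {G : SimpleGraph V}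

lemma Set.Finite.ncard_biUnion_le_ncard_mul {ι α : Type*} {t : Set ι} (ht : t.Finite)
    (s : ι → Set α) {m : ℕ} (h : ∀ i ∈ t, (s i).ncard ≤ m) :
    (⋃ i ∈ t, s i).ncard ≤ t.ncard * m := by
  classical
  calc (⋃ i ∈ t, s i).ncard = (⋃ i ∈ ht.toFinset, s i).ncard := by simp
    _ ≤ ∑ i ∈ ht.toFinset, (s i).ncard := ht.toFinset.set_ncard_biUnion_le s
    _ ≤ ht.toFinset.card • m := Finset.sum_le_card_nsmul _ _ _ (by simpa using h)
    _ = t.ncard * m := by rw [smul_eq_mul, ncard_eq_toFinset_card t ht]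

lemma exists_maxClique_superset [Finite V] {S : Set V} (hS : G.IsClique S) :
    ∃ K, MaxClique G K ∧ S ⊆ K := by
  obtain ⟨K, hSK, hK⟩ := Finite.exists_le_maximal hS
  exact ⟨K, ⟨hK.prop, fun K' hK' hKK' => (hK.le_of_ge hK' hKK').antisymm hKK'⟩, hSK⟩

lemma twin.adj_or_eq {x v y : V} (h : twin G x v) (hxy : G.Adj x y) : G.Adj v y ∨ v = y :=
  (h y).mp (Or.inl hxy)

lemma exists_adj_of_quotGraph_adj {v : V} {b : Quotient (twinSetoid G)}
    (h : (quotGraph G).Adj (qmk G v) b) : ∃ y, qmk G y = b ∧ G.Adj v y := by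
  obtain ⟨hne, x, y, hx, hy, hxy⟩ := h
  refine ⟨y, hy, ?_⟩
  rcases (Quotient.exact hx : twin G x v).adj_or_eq hxy with hvy | rfl
  · exact hvy
  · exact absurd hy hne

lemma le_cideg [Finite V] (v : V) : {K | MaxClique G K ∧ v ∈ K}.ncard ≤ cideg G :=
  le_csSup (finite_range _).bddAbove ⟨v, rfl⟩

lemma ncard_image_qmk_le_cliqueIncDiv [Finite V] {K : Set V} (hK : MaxClique G K) :
    (qmk G '' K).ncard ≤ cliqueIncDiv G :=
  le_csSup ((finite_range fun K : Set V => (qmk G '' K).ncard).subset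
    (by rintro _ ⟨K', -, rfl⟩; exact ⟨K', rfl⟩)).bddAbove ⟨K, hK, rfl⟩

lemma ncard_image_qmk_diff_le [Finite V] {K : Set V} {v : V} (hK : MaxClique G K) (hv : v ∈ K) :
    (qmk G '' K \ {qmk G v}).ncard ≤ cliqueIncDiv G - 1 := by
  rw [ncard_sdiff_singleton_of_mem (mem_image_of_mem _ hv)]
  exact Nat.sub_le_sub_right (ncard_image_qmk_le_cliqueIncDiv hK) 1

lemma quotGraph_neighborSet_subset [Finite V] (v : V) :
    (quotGraph G).neighborSet (qmk G v) ⊆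
      ⋃ K ∈ {K | MaxClique G K ∧ v ∈ K}, qmk G '' K \ {qmk G v} := by
  intro b hb
  obtain ⟨y, rfl, hvy⟩ := exists_adj_of_quotGraph_adj hb
  obtain ⟨K, hK, hvyK⟩ := exists_maxClique_superset (G.isClique_pair.mpr fun _ => hvy)
  exact mem_biUnion ⟨hK, hvyK (mem_insert v _)⟩
    ⟨mem_image_of_mem _ (hvyK (mem_insert_of_mem v rfl)), fun h => hb.1 h.symm⟩

end

theorem stmt7 [Fintype V] (G : SimpleGraph V) :
    maxDeg (quotGraph G) ≤ cideg G * (cliqueIncDiv G - 1) := by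
  refine csSup_le' ?_
  rintro n ⟨a, rfl⟩
  obtain ⟨v, rfl⟩ := Quotient.exists_rep a
  calc ((quotGraph G).neighborSet (qmk G v)).ncard
      ≤ (⋃ K ∈ {K | MaxClique G K ∧ v ∈ K}, qmk G '' K \ {qmk G v}).ncard :=
        ncard_le_ncard (quotGraph_neighborSet_subset v)
    _ ≤ {K | MaxClique G K ∧ v ∈ K}.ncard * (cliqueIncDiv G - 1) :=
        (toFinite _).ncard_biUnion_le_ncard_mul _ fun _ hK => ncard_image_qmk_diff_le hK.1 hK.2
    _ ≤ cideg G * (cliqueIncDiv G - 1) := Nat.mul_le_mul_right _ (le_cideg v)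
end

section
/- For every graph G, the clique-incidence-diversity satisfies ω̃(G) ≤ 2^{cdeg(G)} and the clique-incidence-degree satisfies cideg(G) ≤ cdeg(G) + 1. -/
variable {V : Type} {W : Type}

/-!
Every vertex `v` of a maximal clique `K` lies in `K` and otherwise only in maximal cliques meeting
`K`. Hence `v` lies in at most `cdeg G + 1` maximal cliques, and the set of maximal cliques
other than `K` containing `v` is a subset of the `cdeg G` neighbours of `K` in the clique graph.
That subset determines the set of all maximal cliques through `v`, which in a finite graph
determines the closed neighbourhood of `v`, i.e. its true-twin class; so `K` meets at most
`2 ^ cdeg G` classes.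
-/

open Set

namespace SimpleGraph

variable {G : SimpleGraph V}

def maxCliquesAt (G : SimpleGraph V) (v : V) : Set (Set V) :=
  {K | MaxClique G K ∧ v ∈ K}

/-- The neighbours of `K` in the clique graph of `G`. -/
def otherMaxCliques (G : SimpleGraph V) (K : Set V) : Set (Set V) :=
  {K' | MaxClique G K' ∧ K' ≠ K ∧ (K' ∩ K).Nonempty}

lemma exists_maxClique_superset [Finite V] {S : Set V} (hS : G.IsClique S) :
    ∃ K, MaxClique G K ∧ S ⊆ K := by
  obtain ⟨K, hSK, hK⟩ := Finite.exists_le_maximal (p := G.IsClique) hS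
  exact ⟨K, ⟨hK.1, fun K' hK' hKK' => (hK.2 hK' hKK').antisymm hKK'⟩, hSK⟩

lemma _root_.MaxClique.mem_of_twin {K : Set V} (hK : MaxClique G K) {u v : V} (huv : twin G u v)
    (hu : u ∈ K) : v ∈ K := by
  have hcl : G.IsClique (insert v K) := by
    refine hK.1.insert fun z hz hvz => ?_
    have : G.Adj u z ∨ u = z := by
      by_cases huz : u = z
      · exact Or.inr huz
      · exact Or.inl (hK.1 hu hz huz)
    exact ((huv z).mp this).resolve_right hvz
  rw [← hK.2 _ hcl (subset_insert v K)]
  exact mem_insert v K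

lemma maxCliquesAt_eq_of_twin {u v : V} (huv : twin G u v) :
    G.maxCliquesAt u = G.maxCliquesAt v := by
  ext K
  exact and_congr_right fun hK =>
    ⟨hK.mem_of_twin huv, hK.mem_of_twin fun z => (huv z).symm⟩

/-- In a finite graph the closed neighbourhood of `u` is the union of the maximal cliques
through `u`. -/
lemma twin_of_maxCliquesAt_eq [Finite V] {u v : V}
    (huv : G.maxCliquesAt u = G.maxCliquesAt v) : twin G u v := by
  have closed_nbhd_mono : ∀ a b : V, G.maxCliquesAt a = G.maxCliquesAt b →
      ∀ z, G.Adj a z ∨ a = z → G.Adj b z ∨ b = z := by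
    intro a b hab z hz
    have hcl : G.IsClique {a, z} := by
      rcases hz with hadj | rfl
      · exact isClique_pair.mpr fun _ => hadj
      · simp
    obtain ⟨K, hK, haz⟩ := exists_maxClique_superset hcl
    have hbK : b ∈ K := by
      have hmem : K ∈ G.maxCliquesAt a := ⟨hK, haz (mem_insert a _)⟩
      exact (hab ▸ hmem).2
    by_cases hbz : b = z
    · exact Or.inr hbz
    · exact Or.inl (hK.1 hbK (haz (by simp)) hbz)
  exact fun z => ⟨closed_nbhd_mono u v huv z, closed_nbhd_mono v u huv.symm z⟩

lemma ncard_image_qmk [Finite V] (s : Set V) :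
    (qmk G '' s).ncard = (G.maxCliquesAt '' s).ncard := by
  let φ : Quotient (twinSetoid G) → Set (Set V) :=
    Quotient.lift G.maxCliquesAt fun _ _ => maxCliquesAt_eq_of_twin
  have hφ : φ.Injective := by
    rintro ⟨u⟩ ⟨v⟩ huv
    exact Quotient.sound (twin_of_maxCliquesAt_eq huv)
  rw [← ncard_image_of_injective _ hφ, ← image_comp]
  rfl

lemma maxCliquesAt_subset_insert_otherMaxCliques {K : Set V} {v : V} (hv : v ∈ K) :
    G.maxCliquesAt v ⊆ insert K (G.otherMaxCliques K) := by
  rintro K' ⟨hK', hvK'⟩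
  by_cases hKK' : K' = K
  · exact Or.inl hKK'
  · exact Or.inr ⟨hK', hKK', v, hvK', hv⟩

lemma ncard_maxCliquesAt_le [Finite V] {K : Set V} {v : V} (hv : v ∈ K) :
    (G.maxCliquesAt v).ncard ≤ (G.otherMaxCliques K).ncard + 1 :=
  (ncard_le_ncard (maxCliquesAt_subset_insert_otherMaxCliques hv)).trans (ncard_insert_le _ _)

lemma ncard_image_maxCliquesAt_le [Finite V] {K : Set V} (hK : MaxClique G K) :
    (G.maxCliquesAt '' K).ncard ≤ 2 ^ (G.otherMaxCliques K).ncard := by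
  rw [← ncard_powerset]
  refine ncard_le_ncard_of_injOn (· \ {K}) ?_ ?_
  · rintro _ ⟨v, hv, rfl⟩
    exact sdiff_singleton_subset_iff.mpr (maxCliquesAt_subset_insert_otherMaxCliques hv)
  · rintro _ ⟨u, hu, rfl⟩ _ ⟨v, hv, rfl⟩ huv
    rw [← insert_eq_of_mem (show K ∈ G.maxCliquesAt u from ⟨hK, hu⟩),
      ← insert_eq_of_mem (show K ∈ G.maxCliquesAt v from ⟨hK, hv⟩),
      ← insert_sdiff_singleton, ← insert_sdiff_singleton (s := G.maxCliquesAt v)]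
    exact congrArg (insert K) huv

lemma ncard_otherMaxCliques_le_cdeg [Finite V] {K : Set V} (hK : MaxClique G K) :
    (G.otherMaxCliques K).ncard ≤ cdeg G :=
  le_csSup ⟨Nat.card (Set V), by
    rintro _ ⟨K', -, rfl⟩
    exact (ncard_le_ncard (subset_univ _)).trans_eq (ncard_univ _)⟩ ⟨K, hK, rfl⟩

end SimpleGraph

open SimpleGraph in
theorem stmt12 [Fintype V] (G : SimpleGraph V) :
    cliqueIncDiv G ≤ 2 ^ cdeg G ∧ cideg G ≤ cdeg G + 1 := by
  constructor
  · refine csSup_le' ?_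
    rintro _ ⟨K, hK, rfl⟩
    calc (qmk G '' K).ncard = (G.maxCliquesAt '' K).ncard := ncard_image_qmk K
      _ ≤ 2 ^ (G.otherMaxCliques K).ncard := ncard_image_maxCliquesAt_le hK
      _ ≤ 2 ^ cdeg G := Nat.pow_le_pow_right two_pos (ncard_otherMaxCliques_le_cdeg hK)
  · refine csSup_le' ?_
    rintro _ ⟨v, rfl⟩
    change (G.maxCliquesAt v).ncard ≤ _
    obtain hempty | ⟨K, hK, hv⟩ := (G.maxCliquesAt v).eq_empty_or_nonempty
    · rw [hempty, ncard_empty]; exact Nat.zero_le _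
    · calc (G.maxCliquesAt v).ncard ≤ (G.otherMaxCliques K).ncard + 1 := ncard_maxCliquesAt_le hv
        _ ≤ cdeg G + 1 := Nat.add_le_add_right (ncard_otherMaxCliques_le_cdeg hK) 1
end

section
/- Let G be a graph and let x₁x₂⋯x_ℓ be an induced path in G with ℓ ≥ 3 vertices. Then the sequence of true-twin equivalence classes x̃₁x̃₂⋯x̃_ℓ is an induced path in the quotient graph G̃ (in particular, no two vertices of the path are true twins). -/
variable {V : Type} {W : Type}

variable {G : SimpleGraph V} {a b u v w : V}

theorem twin.symm (h : twin G u v) : twin G v u := fun z => (h z).symm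

theorem twin.adj_of_ne (h : twin G u v) (hne : u ≠ v) : G.Adj u v :=
  ((h v).mpr (Or.inr rfl)).resolve_right hne

theorem not_twin_of_adj_of_not_adj (hvw : G.Adj v w) (huw : ¬G.Adj u w) (hne : u ≠ w) :
    ¬twin G u v := fun h => ((h w).mpr (Or.inl hvw)).elim huw hne

theorem qmk_eq_qmk_iff : qmk G u = qmk G v ↔ twin G u v := Quotient.eq

theorem twin.adj_of_adj {a' b' : V} (ha : twin G a a') (hb : twin G b b') (hab : G.Adj a b)
    (hne : a' ≠ b') : G.Adj a' b' :=
  have hab' : G.Adj a b' ∨ a = b' := ((hb a).mp (Or.inl hab.symm)).imp (fun h => h.symm) Eq.symm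
  ((ha b').mp hab').resolve_right hne

theorem quotGraph_adj_qmk_iff :
    (quotGraph G).Adj (qmk G a) (qmk G b) ↔ ¬twin G a b ∧ G.Adj a b := by
  rw [← qmk_eq_qmk_iff]
  constructor
  · rintro ⟨hne, a', b', ha, hb, hab⟩
    refine ⟨hne, ?_⟩
    have hne' : a ≠ b := fun h => hne (congrArg (qmk G) h)
    exact (qmk_eq_qmk_iff.mp ha).adj_of_adj (qmk_eq_qmk_iff.mp hb) hab hne'
  · rintro ⟨hne, hab⟩
    exact ⟨hne, a, b, rfl, rfl, hab⟩

namespace IsInducedPath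

variable {l : ℕ} {x : Fin l → V} {i j k : Fin l}

theorem not_twin_of_adj_of_far (hx : IsInducedPath G x)
    (hjk : j.val + 1 = k.val ∨ k.val + 1 = j.val)
    (hik : i.val ≠ k.val ∧ i.val + 1 ≠ k.val ∧ k.val + 1 ≠ i.val) : ¬twin G (x i) (x j) :=
  not_twin_of_adj_of_not_adj ((hx.2 j k).mpr hjk) (by rw [hx.2 i k]; omega)
    (hx.1.ne (Fin.val_ne_iff.mp hik.1))

/-- On a path with at least three vertices, consecutive vertices are told apart by a
third path vertex adjacent to exactly one of them. -/
theorem not_twin_of_succ (hx : IsInducedPath G x) (hl : 3 ≤ l) (hij : i.val + 1 = j.val) :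
    ¬twin G (x i) (x j) := by
  by_cases hj : j.val + 1 < l
  · exact hx.not_twin_of_adj_of_far (k := ⟨j.val + 1, hj⟩) (Or.inl rfl) (by simp only; omega)
  · have hi : 1 ≤ i.val := by omega
    exact fun h => hx.not_twin_of_adj_of_far (k := ⟨i.val - 1, by omega⟩)
      (Or.inr (by simp only; omega)) (by simp only; omega) h.symm

theorem eq_of_twin (hx : IsInducedPath G x) (hl : 3 ≤ l) (h : twin G (x i) (x j)) : i = j := by
  by_contra hij
  rcases (hx.2 i j).mp (h.adj_of_ne (hx.1.ne hij)) with hij' | hji'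
  · exact hx.not_twin_of_succ hl hij' h
  · exact hx.not_twin_of_succ hl hji' h.symm

end IsInducedPath

theorem stmt17 (G : SimpleGraph V) {l : ℕ} (hl : 3 ≤ l) (x : Fin l → V)
    (hx : IsInducedPath G x) :
    IsInducedPath (quotGraph G) (fun i => qmk G (x i)) := by
  refine ⟨fun i j h => hx.eq_of_twin hl (qmk_eq_qmk_iff.mp h), fun i j => ?_⟩
  rw [quotGraph_adj_qmk_iff, hx.2 i j, and_iff_right_iff_imp]
  intro hij h
  obtain rfl := hx.eq_of_twin hl h
  omega
end
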